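/- Let S ≥ 2, ρ ∈ (0,1), d > 0, and let U be the S×S matrix with U_{m,m} = 1−ρ and, for ℓ ≠ m, U_{m,ℓ} = ρ·(1/(d|m−ℓ|))/(∑_{ℓ'≠m} 1/(d|m−ℓ'|)). Suppose the left 1-eigenspace {v : vᵀU = vᵀ} is one-dimensional and let v be its element with nonnegative entries summing to 1. Then with α = (d, 2d, …, Sd), the consensus value satisfies vᵀα = (S+1)d/2 = (1/S)∑_{m=1}^S α_m, i.e., the deviation vᵀα − ζ between the expected-channel consensus value and the ground-truth average ζ = (1/S)∑_m α_m is exactly zero. -/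

import Mathlib

/-- Proposition 1 (Consensus Deviation): for the expected AirCons mixing
matrix `U` under equal inter-vehicle distance `d`, the probability-normalized
left `1`-eigenvector `v` satisfies `vᵀα = (S+1)d/2`, the ground-truth average
of the relative distances `α = (d, 2d, …, Sd)`; i.e., the deviation
`vᵀα − ζ` vanishes. -/
theorem consensus_deviation_zero
    (S : ℕ) (hS : 2 ≤ S) (ρ : ℝ) (hρ0 : 0 < ρ) (hρ1 : ρ < 1)
    (d : ℝ) (hd : 0 < d)
    (U : Matrix (Fin S) (Fin S) ℝ)
    (hU : ∀ m ℓ, U m ℓ =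
      if m = ℓ then 1 - ρ
      else ρ * (1 / (d * |(m : ℝ) - (ℓ : ℝ)|)) /
        ∑ ℓ' ∈ Finset.univ.erase m, 1 / (d * |(m : ℝ) - (ℓ' : ℝ)|))
    (hdim : Module.finrank ℝ
      ↥(LinearMap.ker (U.vecMulLinear - LinearMap.id)) = 1)
    (v : Fin S → ℝ)
    (hv : Matrix.vecMul v U = v)
    (hnonneg : ∀ i, 0 ≤ v i)
    (hsum : ∑ i, v i = 1)
    (α : Fin S → ℝ)
    (hα : ∀ i : Fin S, α i = ((i : ℝ) + 1) * d) :
    ∑ i, v i * α i = (S + 1) * d / 2 ∧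
    (S + 1) * d / 2 = (1 / S) * ∑ i, α i := by
  have hS0 : (0:ℝ) < S := by positivity
  -- cast of Fin.rev
  have hrevcast : ∀ i : Fin S, ((Fin.rev i : Fin S) : ℝ) = (S : ℝ) - 1 - (i : ℝ) := by
    intro i
    have h1 : ((Fin.rev i : Fin S) : ℕ) = S - (i + 1) := Fin.val_rev i
    have h2 : (i : ℕ) + 1 ≤ S := i.isLt
    rw [h1, Nat.cast_sub h2]
    push_cast
    ring
  -- the erase sums equal the full sums (the diagonal term is 1/0 = 0)
  have herase : ∀ m : Fin S,
      ∑ ℓ' ∈ Finset.univ.erase m, 1 / (d * |(m : ℝ) - (ℓ' : ℝ)|)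
        = ∑ ℓ' : Fin S, 1 / (d * |(m : ℝ) - (ℓ' : ℝ)|) := by
    intro m
    apply Finset.sum_erase
    simp
  -- persymmetry of U
  have hUsym : ∀ m ℓ : Fin S, U (Fin.rev m) (Fin.rev ℓ) = U m ℓ := by
    intro m ℓ
    rw [hU, hU]
    have hiff : Fin.rev m = Fin.rev ℓ ↔ m = ℓ := by
      constructor
      · intro h; simpa using congrArg Fin.rev h
      · intro h; rw [h]
    by_cases h : m = ℓ
    · simp [h]
    · rw [if_neg (by simpa [hiff] using h), if_neg h]
      have habs : ∀ a b : Fin S,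
          |((Fin.rev a : Fin S) : ℝ) - ((Fin.rev b : Fin S) : ℝ)| = |(a:ℝ) - (b:ℝ)| := by
        intro a b
        rw [hrevcast, hrevcast]
        rw [show ((S:ℝ) - 1 - (a:ℝ)) - ((S:ℝ) - 1 - (b:ℝ)) = (b:ℝ) - (a:ℝ) by ring]
        exact abs_sub_comm _ _
      rw [herase, herase, habs]
      congr 1
      rw [← Equiv.sum_comp (Fin.revPerm) (fun ℓ' => 1 / (d * |((Fin.rev m : Fin S) : ℝ) - (ℓ' : ℝ)|))]
      apply Finset.sum_congr rfl
      intro x _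
      simp only [Fin.revPerm_apply]
      rw [habs]
  -- the reversed vector
  set w : Fin S → ℝ := fun i => v (Fin.rev i) with hw
  have hwsum : ∑ i, w i = 1 := by
    rw [hw]
    rw [show (fun i => v (Fin.rev i)) = (fun i => v (Fin.revPerm i)) from rfl]
    rw [Equiv.sum_comp Fin.revPerm v]
    exact hsum
  -- w is also a left 1-eigenvector
  have hwv : Matrix.vecMul w U = w := by
    funext i
    have : Matrix.vecMul w U i = ∑ j, w j * U j i := by
      simp [Matrix.vecMul, dotProduct]
    rw [this]
    have step1 : ∑ j, w j * U j i = ∑ j, v j * U (Fin.rev j) i := by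
      rw [← Equiv.sum_comp (Fin.revPerm) (fun j => v j * U (Fin.rev j) i)]
      apply Finset.sum_congr rfl
      intro x _
      simp [hw, Fin.rev_rev]
    have step2 : ∀ j, U (Fin.rev j) i = U j (Fin.rev i) := by
      intro j
      have := hUsym j (Fin.rev i)
      rwa [Fin.rev_rev] at this
    rw [step1]
    simp only [step2]
    have : ∑ j, v j * U j (Fin.rev i) = Matrix.vecMul v U (Fin.rev i) := by
      simp [Matrix.vecMul, dotProduct]
    rw [this, hv]
  -- membership in the kernel
  set K := LinearMap.ker (U.vecMulLinear - LinearMap.id) with hK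
  have hvK : v ∈ K := by
    rw [hK, LinearMap.mem_ker]
    simp [Matrix.vecMulLinear, hv]
  have hwK : w ∈ K := by
    rw [hK, LinearMap.mem_ker]
    funext i
    simp [Matrix.vecMulLinear, hwv]
  -- v ≠ 0
  have hvne : v ≠ 0 := by
    intro h
    rw [h] at hsum
    simp at hsum
  have hvKne : (⟨v, hvK⟩ : K) ≠ 0 := by
    intro h
    apply hvne
    exact congrArg Subtype.val h
  -- one-dimensionality forces w = c • v
  obtain ⟨c, hc⟩ := (finrank_eq_one_iff_of_nonzero' (⟨v, hvK⟩ : K) hvKne).mp hdim ⟨w, hwK⟩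
  have hcv : c • v = w := congrArg Subtype.val hc
  have hc1 : c = 1 := by
    have := congrArg (fun f => ∑ i, f i) hcv
    simp only [Pi.smul_apply, smul_eq_mul, ← Finset.mul_sum] at this
    rw [hsum, hwsum] at this
    simpa using this
  have hsymm : ∀ i, v (Fin.rev i) = v i := by
    intro i
    have := congrFun hcv i
    rw [hc1] at this
    simpa [hw] using this.symm
  -- main computation
  have hsum2 : ∑ i, v i * α i = ∑ i, v i * α (Fin.rev i) := by
    rw [← Equiv.sum_comp (Fin.revPerm) (fun i => v i * α (Fin.rev i))]
    apply Finset.sum_congr rfl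
    intro x _
    simp [Fin.rev_rev, hsymm]
  have hαrev : ∀ i : Fin S, α i + α (Fin.rev i) = ((S:ℝ) + 1) * d := by
    intro i
    rw [hα, hα, hrevcast]
    ring
  have h2 : (2:ℝ) * ∑ i, v i * α i = ((S:ℝ) + 1) * d := by
    calc (2:ℝ) * ∑ i, v i * α i
        = ∑ i, v i * α i + ∑ i, v i * α (Fin.rev i) := by rw [← hsum2]; ring
      _ = ∑ i, v i * (α i + α (Fin.rev i)) := by
          rw [← Finset.sum_add_distrib]
          apply Finset.sum_congr rfl
          intro x _; ring
      _ = ∑ i, v i * (((S:ℝ) + 1) * d) := by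
          apply Finset.sum_congr rfl
          intro x _; rw [hαrev]
      _ = (∑ i, v i) * (((S:ℝ) + 1) * d) := by rw [Finset.sum_mul]
      _ = ((S:ℝ) + 1) * d := by rw [hsum]; ring
  have hmain : ∑ i, v i * α i = ((S:ℝ) + 1) * d / 2 := by linarith
  refine ⟨hmain, ?_⟩
  have gauss : ∀ n : ℕ, ∑ i ∈ Finset.range n, ((i:ℝ) + 1) = (n:ℝ) * ((n:ℝ) + 1) / 2 := by
    intro n
    induction n with
    | zero => simp
    | succ k ih => rw [Finset.sum_range_succ, ih]; push_cast; ring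
  have hαsum : ∑ i, α i = (S:ℝ) * ((S:ℝ) + 1) / 2 * d := by
    calc ∑ i, α i = ∑ i : Fin S, ((i:ℝ) + 1) * d := by
          apply Finset.sum_congr rfl; intro x _; rw [hα]
      _ = (∑ i : Fin S, ((i:ℝ) + 1)) * d := by rw [Finset.sum_mul]
      _ = (∑ i ∈ Finset.range S, ((i:ℝ) + 1)) * d := by
          rw [Fin.sum_univ_eq_sum_range (fun i => ((i:ℝ) + 1)) S]
      _ = (S:ℝ) * ((S:ℝ) + 1) / 2 * d := by rw [gauss]
  rw [hαsum]
  field_simp
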